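/- arXiv:1101.2069 — 5 statements merged into one kernel-verified Lean document; each statement's English description precedes it below -/
import Mathlib

section
/- Let V be a real vector space of dimension n ≥ 2, let σ : V × V → V be a symmetric bilinear map, and let f : Ω → ℝ be a function on a nonempty open cone Ω ⊆ V with f(c·v) = c·f(v) for all c > 0 and v ∈ Ω with c·v ∈ Ω. If σ(v, v) = f(v)·v for all v ∈ Ω, then there exists a linear functional φ on V such that f(v) = φ(v) for all v in some nonempty open subset of Ω, and σ(v,v) = φ(v)·v there. -/
/-! Pick `v₀ ∈ Ω` nonzero and a functional `ψ` with `ψ v₀ = 1`. Since `σ v v` is a multiple of `v`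
on `Ω`, the cubic identity `ψ v • σ v v = ψ (σ v v) • v` holds there, in particular at `v₀ + t • w`
for all small `t`, so its coefficients in `t` vanish. Modulo the line `ℝ ∙ v₀`, the coefficients of
`1`, `t` and `t²` give `σ w w ≡ φ w • w` with the linear `φ = 2 ψ (σ v₀ ·) - ψ (σ v₀ v₀) ψ`. For `v ∈ Ω`
off that line, comparing with `σ v v = f v • v` forces `f v = φ v`. -/

open Module Polynomial

section VectorSpace

variable {K V : Type*} [Field K] [AddCommGroup V] [Module K V]

theorem cubic_coeffs_eq_zero_of_infinite {S : Set K} (hS : S.Infinite) {a b c d : V}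
    (h : ∀ t ∈ S, a + t • b + t ^ 2 • c + t ^ 3 • d = 0) :
    a = 0 ∧ b = 0 ∧ c = 0 ∧ d = 0 := by
  simp only [← forall_dual_apply_eq_zero_iff K (V := V), ← forall_and]
  intro ℓ
  let p : K[X] := C (ℓ a) + C (ℓ b) * X + C (ℓ c) * X ^ 2 + C (ℓ d) * X ^ 3
  have hp : p = 0 := p.eq_zero_of_infinite_isRoot <| hS.mono fun t ht => by
    have := congrArg ℓ (h t ht)
    simp only [map_add, map_smul, smul_eq_mul, map_zero] at this
    simp only [Set.mem_ofPred_eq, IsRoot, p, eval_add, eval_mul, eval_C, eval_X, eval_pow]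
    linear_combination this
  refine ⟨?_, ?_, ?_, ?_⟩
  · simpa [p] using congrArg (coeff · 0) hp
  · simpa [p, coeff_X] using congrArg (coeff · 1) hp
  · simpa [p, coeff_X] using congrArg (coeff · 2) hp
  · simpa [p, coeff_X] using congrArg (coeff · 3) hp

theorem Module.Dual.smul_apply_self_eq_of_mem_span_singleton (ψ : Dual K V) {v x : V}
    (hx : x ∈ K ∙ v) : ψ v • x = ψ x • v := by
  obtain ⟨c, rfl⟩ := Submodule.mem_span_singleton.mp hx
  rw [smul_comm, map_smul, smul_eq_mul, mul_smul]

theorem mkQ_apply_self_eq_of_infinite_setOf_mem_span (σ : V →ₗ[K] V →ₗ[K] V)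
    (hσ : ∀ u v, σ u v = σ v u) {ψ : Dual K V} {v₀ w : V} (hψ : ψ v₀ = 1) {S : Set K}
    (hS : S.Infinite) (h : ∀ t ∈ S, σ (v₀ + t • w) (v₀ + t • w) ∈ K ∙ (v₀ + t • w)) :
    (K ∙ v₀).mkQ (σ w w) = (2 * ψ (σ v₀ w) - ψ (σ v₀ v₀) * ψ w) • (K ∙ v₀).mkQ w := by
  set π := (K ∙ v₀).mkQ
  have hπ : π v₀ = 0 := (Submodule.Quotient.mk_eq_zero _).mpr (Submodule.mem_span_singleton_self v₀)
  obtain ⟨h₀, h₁, h₂, -⟩ := cubic_coeffs_eq_zero_of_infinite hS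
    (a := π (σ v₀ v₀))
    (b := ψ w • π (σ v₀ v₀) + (2 : K) • π (σ v₀ w) - ψ (σ v₀ v₀) • π w)
    (c := (2 * ψ w) • π (σ v₀ w) + π (σ w w) - (2 * ψ (σ v₀ w)) • π w)
    (d := ψ w • π (σ w w) - ψ (σ w w) • π w) fun t ht => by
      have := congrArg π (ψ.smul_apply_self_eq_of_mem_span_singleton (h t ht))
      simp only [map_add, map_smul, LinearMap.add_apply, LinearMap.smul_apply, smul_eq_mul,
        hσ w v₀, hψ, hπ] at this
      linear_combination (norm := module) this
  linear_combination (norm := module) h₂ - ψ w • h₁ + (ψ w * ψ w) • h₀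

end VectorSpace

theorem IsOpen.infinite_setOf_add_smul_mem {E : Type*} [AddCommGroup E] [TopologicalSpace E]
    [IsTopologicalAddGroup E] [Module ℝ E] [ContinuousSMul ℝ E] {Ω : Set E} (hΩ : IsOpen Ω)
    {v : E} (hv : v ∈ Ω) (w : E) : {t : ℝ | v + t • w ∈ Ω}.Infinite :=
  infinite_of_mem_nhds 0 <| (hΩ.preimage (by fun_prop)).mem_nhds (by simpa using hv)

theorem IsOpen.exists_mem_notMem_of_ne_top {K E : Type*} [NontriviallyNormedField K]
    [AddCommGroup E] [TopologicalSpace E] [ContinuousAdd E] [Module K E] [ContinuousSMul K E]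
    {Ω : Set E} (hΩ : IsOpen Ω) (hne : Ω.Nonempty) {p : Submodule K E} (hp : p ≠ ⊤) :
    ∃ v ∈ Ω, v ∉ p := by
  by_contra! h
  exact hp <| p.eq_top_of_nonempty_interior' (hne.mono (hΩ.subset_interior_iff.mpr h))

theorem homogeneous_quadratic_proportional_implies_locally_linear_general
    {V : Type*} [NormedAddCommGroup V] [NormedSpace ℝ V] [FiniteDimensional ℝ V]
    (hdim : 2 ≤ finrank ℝ V)
    (σ : V →ₗ[ℝ] V →ₗ[ℝ] V) (hσsym : ∀ u v, σ u v = σ v u)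
    (Ω : Set V) (hΩopen : IsOpen Ω) (hΩne : Ω.Nonempty)
    (f : V → ℝ)
    (heq : ∀ v ∈ Ω, σ v v = f v • v) :
    ∃ φ : V →ₗ[ℝ] ℝ, ∃ Ω' : Set V, Ω' ⊆ Ω ∧ IsOpen Ω' ∧ Ω'.Nonempty ∧
      ∀ v ∈ Ω', f v = φ v ∧ σ v v = φ v • v := by
  have : Nontrivial V := Module.nontrivial_of_finrank_pos (R := ℝ) (by omega)
  obtain ⟨v₀, hv₀Ω, hv₀⟩ := hΩopen.exists_mem_notMem_of_ne_top hΩne (p := (⊥ : Submodule ℝ V))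
    bot_ne_top
  obtain ⟨ψ, hψ⟩ := Projective.exists_dual_eq_one ℝ (by simpa using hv₀)
  have hline : (ℝ ∙ v₀) ≠ ⊤ := fun h => by
    have := finrank_span_singleton (K := ℝ) (by simpa using hv₀)
    rw [h, finrank_top] at this
    omega
  let φ : V →ₗ[ℝ] ℝ := 2 • ψ ∘ₗ σ v₀ - ψ (σ v₀ v₀) • ψ
  refine ⟨φ, Ω \ (ℝ ∙ v₀), Set.sdiff_subset, hΩopen.sdiff (Submodule.closed_of_finiteDimensional _),
    hΩopen.exists_mem_notMem_of_ne_top hΩne hline, fun v ⟨hvΩ, hv⟩ => ?_⟩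
  have hquad : (ℝ ∙ v₀).mkQ (σ v v) = φ v • (ℝ ∙ v₀).mkQ v := by
    refine (mkQ_apply_self_eq_of_infinite_setOf_mem_span σ hσsym hψ
      (hΩopen.infinite_setOf_add_smul_mem hv₀Ω v) fun t ht => ?_).trans (by simp [φ])
    rw [heq _ ht]
    exact Submodule.smul_mem _ _ (Submodule.mem_span_singleton_self _)
  have hfφ : f v = φ v := by
    refine smul_left_injective ℝ (m := (ℝ ∙ v₀).mkQ v) (by simpa using hv) ?_
    simpa only [← map_smul, ← heq v hvΩ] using hquad
  exact ⟨hfφ, hfφ ▸ heq v hvΩ⟩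

/-- if a symmetric bilinear map satisfies `σ(v,v) = f(v)·v` on an open cone
with `f` positively 1-homogeneous, then `f` is linear on some nonempty open subset. -/
theorem homogeneous_quadratic_proportional_implies_locally_linear
    {V : Type*} [NormedAddCommGroup V] [NormedSpace ℝ V] [FiniteDimensional ℝ V]
    (hdim : 2 ≤ finrank ℝ V)
    (σ : V →ₗ[ℝ] V →ₗ[ℝ] V) (hσsym : ∀ u v, σ u v = σ v u)
    (Ω : Set V) (hΩopen : IsOpen Ω) (hΩne : Ω.Nonempty)
    (hΩcone : ∀ c : ℝ, 0 < c → ∀ v ∈ Ω, c • v ∈ Ω)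
    (f : V → ℝ)
    (hhom : ∀ c : ℝ, 0 < c → ∀ v ∈ Ω, c • v ∈ Ω → f (c • v) = c * f v)
    (heq : ∀ v ∈ Ω, σ v v = f v • v) :
    ∃ φ : V →ₗ[ℝ] ℝ, ∃ Ω' : Set V, Ω' ⊆ Ω ∧ IsOpen Ω' ∧ Ω'.Nonempty ∧
      ∀ v ∈ Ω', f v = φ v ∧ σ v v = φ v • v :=
  homogeneous_quadratic_proportional_implies_locally_linear_general hdim σ hσsym Ω hΩopen hΩne f heq
end

section
/- Two symmetric affine connections Γ and Γ̄ on an open set U ⊆ ℝⁿ (n ≥ 2) have the same unparameterized geodesics (in the sense that every curve satisfying γ̈ᵃ + Γᵃ_{bc} γ̇ᵇ γ̇ᶜ ∥ γ̇ᵃ also satisfies γ̈ᵃ + Γ̄ᵃ_{bc} γ̇ᵇ γ̇ᶜ ∥ γ̇ᵃ for velocities in an open cone at every point) if and only if there is a 1-form φ with Γ̄ᵃ_{bc} = Γᵃ_{bc} + δᵃ_b φ_c + δᵃ_c φ_b. In particular, the difference tensor Γ̃ = Γ̄ − Γ satisfies Γ̃ᵃ_{bc} vᵇ vᶜ = f̃(v)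 vᵃ for some function f̃ which is then necessarily of the form f̃(v) = 2φ_b vᵇ. -/
/-!
Write `D = Γ̄ - Γ`. Comparing the two geodesic conditions for the same acceleration shows
that `Dᵃ_{bc} vᵇ vᶜ` is parallel to `v` for `v` in the open cone, so the cubic polynomial
identity `Dᵃ(v,v) vᵉ = Dᵉ(v,v) vᵃ` holds on an open set, hence everywhere by analyticity.
Polarizing it and contracting `e` against a lower index gives
`(n + 1) Dᵃ_{bc} = δᵃ_b t_c + δᵃ_c t_b` with `t_b = Dᵈ_{bd}`, i.e. `φ = t / (n + 1)`.
Conversely a projective change adds `2 φ(v) v` to the acceleration, which only shifts the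
proportionality factor.
-/

open Finset

section

variable {ι : Type*}

lemma exists_add_eq_mul_iff_of_eq_add_mul {q q' v w : ι → ℝ} {s : ℝ}
    (h : ∀ a, q' a = q a + s * v a) :
    (∃ r : ℝ, ∀ a, w a + q a = r * v a) ↔ (∃ r : ℝ, ∀ a, w a + q' a = r * v a) := by
  constructor
  · rintro ⟨r, hr⟩
    exact ⟨r + s, fun a => by rw [h]; linear_combination hr a⟩
  · rintro ⟨r, hr⟩
    exact ⟨r - s, fun a => by linear_combination hr a - h a⟩

variable [Fintype ι]

def quadContract (D : ι → ι → ι → ℝ) (v : ι → ℝ) (a : ι) : ℝ :=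
  ∑ b, ∑ c, D a b c * v b * v c

lemma analyticAt_eval (b : ι) (z : ι → ℝ) : AnalyticAt ℝ (fun v : ι → ℝ => v b) z :=
  (ContinuousLinearMap.proj (R := ℝ) (φ := fun _ : ι => ℝ) b).analyticAt z

lemma analyticAt_quadContract (D : ι → ι → ι → ℝ) (a : ι) (z : ι → ℝ) :
    AnalyticAt ℝ (fun v => quadContract D v a) z :=
  analyticAt_fun_sum _ fun b _ => analyticAt_fun_sum _ fun c _ =>
    (analyticAt_const.mul (analyticAt_eval b z)).mul (analyticAt_eval c z)

lemma quadContract_mul_comm_of_parallel_on_open {Ω : Set (ι → ℝ)} (hΩ : IsOpen Ω)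
    (hne : Ω.Nonempty) {D : ι → ι → ι → ℝ}
    (h : ∀ v ∈ Ω, ∃ r : ℝ, ∀ a, quadContract D v a = r * v a) (v : ι → ℝ) (a e : ι) :
    quadContract D v a * v e = quadContract D v e * v a := by
  obtain ⟨v₀, hv₀⟩ := hne
  have hzero :
      Set.EqOn (fun v => quadContract D v a * v e - quadContract D v e * v a) 0 Set.univ :=
    AnalyticOnNhd.eqOn_zero_of_preconnected_of_eventuallyEq_zero
      (fun z _ => ((analyticAt_quadContract D a z).mul (analyticAt_eval e z)).sub
        ((analyticAt_quadContract D e z).mul (analyticAt_eval a z)))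
      isPreconnected_univ (Set.mem_univ v₀) <| by
        filter_upwards [hΩ.mem_nhds hv₀] with w hw
        obtain ⟨r, hr⟩ := h w hw
        simp only [hr, Pi.zero_apply]
        ring
  exact sub_eq_zero.1 (hzero (Set.mem_univ v))

lemma quadContract_mul_sub_eq_cubic [DecidableEq ι] (D : ι → ι → ι → ℝ) (v : ι → ℝ)
    (a e : ι) :
    quadContract D v a * v e - quadContract D v e * v a =
      ∑ i, v i * ∑ j, v j * ∑ k, v k *
        (D a i j * (if e = k then 1 else 0) - D e i j * (if a = k then 1 else 0)) := by
  simp only [quadContract, mul_sub, mul_ite, mul_one, mul_zero, sum_sub_distrib, sum_ite_eq,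
    mem_univ, if_true, sum_mul, mul_sum]
  congr 1 <;> exact sum_congr rfl fun i _ => sum_congr rfl fun j _ => by ring

def projectiveTensor [DecidableEq ι] (φ : ι → ℝ) (a b c : ι) : ℝ :=
  (if a = b then φ c else 0) + (if a = c then φ b else 0)

noncomputable def projectiveTrace (D : ι → ι → ι → ℝ) (b : ι) : ℝ :=
  (∑ d, D d b d) / (Fintype.card ι + 1)

lemma sum_ite_add_ite_add_ite_mul [DecidableEq ι] (f : ι → ℝ) (b c d : ι) (s t u : ℝ) :
    ∑ j, ((if j = b then s else 0) + (if j = c then t else 0) + (if j = d then u else 0)) * f j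
      = s * f b + t * f c + u * f d := by
  simp [add_mul, sum_add_distrib, ite_mul]

lemma symm_sum_eq_zero_of_cubic_eq_zero [DecidableEq ι] {K : ι → ι → ι → ℝ}
    (h : ∀ v : ι → ℝ, ∑ i, v i * ∑ j, v j * ∑ k, v k * K i j k = 0) (b c d : ι) :
    K b c d + K b d c + K c b d + K c d b + K d b c + K d c b = 0 := by
  have h' : ∀ s t u : ℝ, _ := fun s t u =>
    h fun j => (if j = b then s else 0) + (if j = c then t else 0) + (if j = d then u else 0)
  simp only [sum_ite_add_ite_add_ite_mul] at h'
  -- inclusion–exclusion in `s, t, u` isolates the coefficient of `s * t * u`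
  linear_combination h' 1 1 1 - h' 1 1 0 - h' 1 0 1 - h' 0 1 1 + h' 1 0 0 + h' 0 1 0 + h' 0 0 1

lemma eq_projective_of_quadContract_mul_comm [DecidableEq ι] {D : ι → ι → ι → ℝ}
    (hD : ∀ a b c, D a b c = D a c b)
    (h : ∀ v a e, quadContract D v a * v e = quadContract D v e * v a) :
    D = projectiveTensor (projectiveTrace D) := by
  funext a b c
  have hsymm := fun e => symm_sum_eq_zero_of_cubic_eq_zero fun v =>
    (quadContract_mul_sub_eq_cubic D v a e).symm.trans (sub_eq_zero.2 (h v a e))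
  have hcontr := sum_eq_zero fun d (_ : d ∈ univ) => hsymm d b c d
  simp only [mul_ite, mul_one, mul_zero, sum_add_distrib, sum_sub_distrib, sum_ite_eq,
    sum_ite_eq', mem_univ, if_true, sum_const, card_univ, nsmul_eq_mul] at hcontr
  have htr : ∀ b, ∑ d, D d d b = ∑ d, D d b d := fun b => sum_congr rfl fun d _ => hD d d b
  have hn : (Fintype.card ι + 1 : ℝ) ≠ 0 := by positivity
  rw [← hD a b c] at hcontr
  have hmul : (Fintype.card ι + 1 : ℝ) * D a b c =
      (if a = b then ∑ d, D d c d else 0) + (if a = c then ∑ d, D d b d else 0) := by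
    split_ifs at hcontr ⊢ <;> simp only [sum_const_zero, htr] at hcontr <;> linarith
  apply mul_left_cancel₀ hn
  rw [hmul, projectiveTensor, projectiveTrace, projectiveTrace]
  split_ifs <;> simp only [mul_add, mul_zero, mul_div_cancel₀ _ hn]

lemma quadContract_projectiveTensor [DecidableEq ι] (φ : ι → ℝ) (v : ι → ℝ) (a : ι) :
    quadContract (projectiveTensor φ) v a = (2 * ∑ b, φ b * v b) * v a := by
  simp only [quadContract, projectiveTensor, add_mul, ite_mul, zero_mul, sum_add_distrib]
  rw [sum_comm]
  simp only [sum_ite_eq, mem_univ, if_true]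
  rw [two_mul, add_mul, sum_mul]
  congr 1
  exact sum_congr rfl fun b _ => by ring

end

theorem same_unparameterized_geodesics_iff_projective_change_general
    {n : ℕ}
    (U : Set (Fin n → ℝ))
    (Γ Γbar : (Fin n → ℝ) → Fin n → Fin n → Fin n → ℝ)
    (hΓsym : ∀ x a b c, Γ x a b c = Γ x a c b)
    (hΓbarsym : ∀ x a b c, Γbar x a b c = Γbar x a c b)
    (Ω : (Fin n → ℝ) → Set (Fin n → ℝ))
    (hΩopen : ∀ x, IsOpen (Ω x)) (hΩne : ∀ x ∈ U, (Ω x).Nonempty) :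
    (∀ x ∈ U, ∀ v ∈ Ω x, ∀ w : Fin n → ℝ,
        (∃ r : ℝ, ∀ a, w a + ∑ b, ∑ c, Γ x a b c * v b * v c = r * v a) ↔
        (∃ r : ℝ, ∀ a, w a + ∑ b, ∑ c, Γbar x a b c * v b * v c = r * v a))
    ↔
    (∃ φ : (Fin n → ℝ) → Fin n → ℝ,
      (∀ x ∈ U, ∀ a b c, Γbar x a b c =
        Γ x a b c + (if a = b then φ x c else 0) + (if a = c then φ x b else 0)) ∧
      (∀ x ∈ U, ∀ v : Fin n → ℝ, ∀ a,
        ∑ b, ∑ c, (Γbar x a b c - Γ x a b c) * v b * v c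
          = (2 * ∑ b, φ x b * v b) * v a)) := by
  set D : (Fin n → ℝ) → Fin n → Fin n → Fin n → ℝ := fun x a b c => Γbar x a b c - Γ x a b c
  constructor
  · intro H
    have hpar : ∀ x ∈ U, ∀ v ∈ Ω x, ∃ r : ℝ, ∀ a, quadContract (D x) v a = r * v a := by
      intro x hx v hv
      obtain ⟨r, hr⟩ := (H x hx v hv fun a => -quadContract (Γ x) v a).mp
        ⟨0, fun a => by simp [quadContract]⟩
      refine ⟨r, fun a => ?_⟩
      have := hr a
      simp only [quadContract, D, sub_mul, sum_sub_distrib] at this ⊢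
      linarith
    have hproj (x) (hx : x ∈ U) : D x = projectiveTensor (projectiveTrace (D x)) :=
      eq_projective_of_quadContract_mul_comm
        (fun a b c => by simp only [D, hΓsym x a b, hΓbarsym x a b])
        (quadContract_mul_comm_of_parallel_on_open (hΩopen x) (hΩne x hx) (hpar x hx))
    refine ⟨fun x => projectiveTrace (D x), fun x hx a b c => ?_, fun x hx v a => ?_⟩
    · have := congrFun (congrFun (congrFun (hproj x hx) a) b) c
      simp only [D, projectiveTensor] at this
      linarith
    · show quadContract (D x) v a = _
      rw [hproj x hx, quadContract_projectiveTensor]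
  · rintro ⟨φ, -, hφ⟩ x hx v _ w
    refine exists_add_eq_mul_iff_of_eq_add_mul (s := 2 * ∑ b, φ x b * v b) fun a => ?_
    have := hφ x hx v a
    simp only [sub_mul, sum_sub_distrib] at this
    linarith

/-- two symmetric affine connections have the same unparameterized
geodesics (velocities ranging in a nonempty open cone at every point) if and only if
they are related by `Γ̄ᵃ_{bc} = Γᵃ_{bc} + δᵃ_b φ_c + δᵃ_c φ_b` for a 1-form `φ`;
in that case the difference tensor satisfies `Γ̃ᵃ_{bc} vᵇvᶜ = (2 φ_b vᵇ) vᵃ`. -/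
theorem same_unparameterized_geodesics_iff_projective_change
    {n : ℕ} (hn : 2 ≤ n)
    (U : Set (Fin n → ℝ)) (hUopen : IsOpen U) (hUne : U.Nonempty)
    (Γ Γbar : (Fin n → ℝ) → Fin n → Fin n → Fin n → ℝ)
    (hΓsym : ∀ x a b c, Γ x a b c = Γ x a c b)
    (hΓbarsym : ∀ x a b c, Γbar x a b c = Γbar x a c b)
    (Ω : (Fin n → ℝ) → Set (Fin n → ℝ))
    (hΩopen : ∀ x, IsOpen (Ω x)) (hΩne : ∀ x ∈ U, (Ω x).Nonempty)
    (hΩcone : ∀ x, ∀ c : ℝ, 0 < c → ∀ v ∈ Ω x, c • v ∈ Ω x) :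
    (∀ x ∈ U, ∀ v ∈ Ω x, ∀ w : Fin n → ℝ,
        (∃ r : ℝ, ∀ a, w a + ∑ b, ∑ c, Γ x a b c * v b * v c = r * v a) ↔
        (∃ r : ℝ, ∀ a, w a + ∑ b, ∑ c, Γbar x a b c * v b * v c = r * v a))
    ↔
    (∃ φ : (Fin n → ℝ) → Fin n → ℝ,
      (∀ x ∈ U, ∀ a b c, Γbar x a b c =
        Γ x a b c + (if a = b then φ x c else 0) + (if a = c then φ x b else 0)) ∧
      (∀ x ∈ U, ∀ v : Fin n → ℝ, ∀ a,
        ∑ b, ∑ c, (Γbar x a b c - Γ x a b c) * v b * v c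
          = (2 * ∑ b, φ x b * v b) * v a)) :=
  same_unparameterized_geodesics_iff_projective_change_general U Γ Γbar hΓsym hΓbarsym Ω hΩopen hΩne
end

section
/- Fix a point x₀ and suppose the pointwise at-x₀ equation Γ̃ᵃ_{bc} vᵇ vᶜ = f̃(v) vᵃ holds for all v in a nonempty open cone Ω ⊆ ℝⁿ, where Γ̃ is a symmetric (1,2)-tensor at x₀. Then there is a covector φ at x₀ such that Γ̃ᵃ_{bc} = δᵃ_b φ_c + δᵃ_c φ_b. -/
/-!
Write `Γ(v,v)ᵃ = Γᵃ_{bc} vᵇ vᶜ`. On `Ω` the `2 × 2` minors `Γ(v,v)ᵃ vᵈ - Γ(v,v)ᵈ vᵃ` vanish, which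
eliminates `f̃`; being polynomial, hence analytic, they vanish on all of `ℝⁿ` by the identity
theorem. Evaluating the minors at `e_d`, `e_a ± e_d` and `e_b + e_c` gives `Γᵃ_{dd} = 0`,
`2 Γᵃ_{ad} = Γᵈ_{dd}` and `Γᵃ_{bc} = 0` for distinct indices, so `φ_d = Γᵈ_{dd} / 2` works.
-/

open Finset

def contractTwice {ι R : Type*} [Fintype ι] [Mul R] [AddCommMonoid R]
    (Γ : ι → ι → ι → R) (v : ι → R) (a : ι) : R :=
  ∑ b, ∑ c, Γ a b c * v b * v c

def ContractTwiceParallel {ι R : Type*} [Fintype ι] [CommSemiring R] (Γ : ι → ι → ι → R) :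
    Prop :=
  ∀ v a d, contractTwice Γ v a * v d = contractTwice Γ v d * v a

theorem contractTwice_single_add_single {ι R : Type*} [Fintype ι] [DecidableEq ι] [CommSemiring R]
    (Γ : ι → ι → ι → R) (a i j : ι) (s t : R) :
    contractTwice Γ (Pi.single i s + Pi.single j t) a
      = s ^ 2 * Γ a i i + s * t * (Γ a i j + Γ a j i) + t ^ 2 * Γ a j j := by
  simp only [contractTwice, Pi.add_apply, mul_add, add_mul, sum_add_distrib, Pi.single_apply,
    mul_ite, ite_mul, mul_zero, zero_mul, sum_ite_eq', mem_univ, if_true]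
  ring

section Analytic

variable {ι 𝕜 : Type*} [Fintype ι] [RCLike 𝕜]

theorem analyticOnNhd_apply (i : ι) : AnalyticOnNhd 𝕜 (fun v : ι → 𝕜 => v i) Set.univ :=
  (ContinuousLinearMap.proj (R := 𝕜) (φ := fun _ : ι => 𝕜) i).analyticOnNhd _

theorem analyticOnNhd_contractTwice (Γ : ι → ι → ι → 𝕜) (a : ι) :
    AnalyticOnNhd 𝕜 (fun v => contractTwice Γ v a) Set.univ :=
  Finset.analyticOnNhd_fun_sum _ fun b _ ↦ Finset.analyticOnNhd_fun_sum _ fun c _ ↦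
    (analyticOnNhd_const.mul (analyticOnNhd_apply b)).mul (analyticOnNhd_apply c)

theorem contractTwiceParallel_of_eqOn {Γ : ι → ι → ι → 𝕜} {Ω : Set (ι → 𝕜)} (hΩ : IsOpen Ω)
    (hΩne : Ω.Nonempty) {f : (ι → 𝕜) → 𝕜}
    (heq : ∀ v ∈ Ω, ∀ a, contractTwice Γ v a = f v * v a) : ContractTwiceParallel Γ := by
  intro v a d
  obtain ⟨v₀, hv₀⟩ := hΩne
  refine congrFun
    (((analyticOnNhd_contractTwice Γ a).mul (analyticOnNhd_apply d)).eq_of_eventuallyEq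
      ((analyticOnNhd_contractTwice Γ d).mul (analyticOnNhd_apply a)) (z₀ := v₀) ?_) v
  filter_upwards [hΩ.mem_nhds hv₀] with w hw
  rw [heq w hw, heq w hw]
  ring

end Analytic

section PureTrace

variable {ι K : Type*} [Fintype ι] [DecidableEq ι] [Field K] {Γ : ι → ι → ι → K}

theorem ContractTwiceParallel.apply_self_self_eq_zero (h : ContractTwiceParallel Γ) {a d : ι}
    (had : a ≠ d) : Γ a d d = 0 := by
  have hd := h (Pi.single a 0 + Pi.single d 1) a d
  rw [contractTwice_single_add_single, contractTwice_single_add_single] at hd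
  simpa [had] using hd

theorem ContractTwiceParallel.apply_self_eq_half [NeZero (2 : K)] (h : ContractTwiceParallel Γ)
    (hsym : ∀ a b c, Γ a b c = Γ a c b) {a d : ι} (had : a ≠ d) :
    Γ a a d = Γ d d d / 2 := by
  have hplus := h (Pi.single a 1 + Pi.single d 1) a d
  have hminus := h (Pi.single a 1 + Pi.single d (-1)) a d
  simp only [contractTwice_single_add_single, Pi.add_apply, Pi.single_apply, if_neg had,
    if_neg had.symm, if_pos] at hplus hminus
  have htwice : (2 : K) * (Γ a a d * 2 - Γ d d d) = 0 := by
    linear_combination hplus + hminus + 2 * hsym a a d + 2 * h.apply_self_self_eq_zero had.symm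
  rw [eq_div_iff two_ne_zero, ← sub_eq_zero]
  exact (mul_eq_zero.1 htwice).resolve_left two_ne_zero

theorem ContractTwiceParallel.apply_eq_zero [NeZero (2 : K)] (h : ContractTwiceParallel Γ)
    (hsym : ∀ a b c, Γ a b c = Γ a c b) {a b c : ι} (hab : a ≠ b) (hac : a ≠ c) (hbc : b ≠ c) :
    Γ a b c = 0 := by
  have hsum := h (Pi.single b 1 + Pi.single c 1) a b
  simp only [contractTwice_single_add_single, Pi.add_apply, Pi.single_apply, if_neg hab,
    if_neg hac, if_neg hbc, if_pos] at hsum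
  have htwice : (2 : K) * Γ a b c = 0 := by
    linear_combination hsum + hsym a b c - h.apply_self_self_eq_zero hab
      - h.apply_self_self_eq_zero hac
  exact (mul_eq_zero.1 htwice).resolve_left two_ne_zero

theorem ContractTwiceParallel.exists_eq_pure_trace [NeZero (2 : K)] (h : ContractTwiceParallel Γ)
    (hsym : ∀ a b c, Γ a b c = Γ a c b) :
    ∃ φ : ι → K, ∀ a b c,
      Γ a b c = (if a = b then φ c else 0) + (if a = c then φ b else 0) := by
  refine ⟨fun d => Γ d d d / 2, fun a b c => ?_⟩
  rcases eq_or_ne a b with rfl | hab <;> rcases eq_or_ne a c with rfl | hac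
  · simp only [if_pos, add_halves]
  · simp [hac, h.apply_self_eq_half hsym hac]
  · simp [hab, hsym a b a, h.apply_self_eq_half hsym hab]
  · rcases eq_or_ne b c with rfl | hbc
    · simp [hab, h.apply_self_self_eq_zero hab]
    · simp [hab, hac, h.apply_eq_zero hsym hab hac hbc]

end PureTrace

theorem pointwise_difference_tensor_is_pure_trace_general
    {n : ℕ}
    (Γt : Fin n → Fin n → Fin n → ℝ)
    (hsym : ∀ a b c, Γt a b c = Γt a c b)
    (Ω : Set (Fin n → ℝ)) (hΩopen : IsOpen Ω) (hΩne : Ω.Nonempty)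
    (f : (Fin n → ℝ) → ℝ)
    (heq : ∀ v ∈ Ω, ∀ a, ∑ b, ∑ c, Γt a b c * v b * v c = f v * v a) :
    ∃ φ : Fin n → ℝ, ∀ a b c,
      Γt a b c = (if a = b then φ c else 0) + (if a = c then φ b else 0) :=
  (contractTwiceParallel_of_eqOn hΩopen hΩne heq).exists_eq_pure_trace hsym

/-- a symmetric (1,2)-tensor at a point satisfying
`Γ̃ᵃ_{bc} vᵇvᶜ = f̃(v) vᵃ` on a nonempty open cone is of the form
`Γ̃ᵃ_{bc} = δᵃ_b φ_c + δᵃ_c φ_b`. -/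
theorem pointwise_difference_tensor_is_pure_trace
    {n : ℕ} (hn : 2 ≤ n)
    (Γt : Fin n → Fin n → Fin n → ℝ)
    (hsym : ∀ a b c, Γt a b c = Γt a c b)
    (Ω : Set (Fin n → ℝ)) (hΩopen : IsOpen Ω) (hΩne : Ω.Nonempty)
    (hΩcone : ∀ c : ℝ, 0 < c → ∀ v ∈ Ω, c • v ∈ Ω)
    (f : (Fin n → ℝ) → ℝ)
    (heq : ∀ v ∈ Ω, ∀ a, ∑ b, ∑ c, Γt a b c * v b * v c = f v * v a) :
    ∃ φ : Fin n → ℝ, ∀ a b c,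
      Γt a b c = (if a = b then φ c else 0) + (if a = c then φ b else 0) :=
  pointwise_difference_tensor_is_pure_trace_general Γt hsym Ω hΩopen hΩne f heq
end

section
/- On a pseudo-Riemannian manifold of Lorentz signature (−,+,+,+) in dimension 4, a self-adjoint endomorphism L of the tangent space at a point (self-adjoint with respect to the Lorentzian inner product g) cannot have a complex (non-real) eigenvalue of algebraic multiplicity greater than one, cannot have a Jordan block of size ≥ 2 corresponding to a complex (non-real) eigenvalue, and cannot have a real-eigenvalue Jordan block of size ≥ 4. -/
/-!
The Lorentz form has Witt index one: it admits no two-dimensional totally isotropic subspace.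
If `N` is `g`-self-adjoint with `N⁴ v = 0 ≠ N³ v`, then `N² v` and `N³ v` would span such a
subspace. For a non-real eigenvalue `μ` of the complexified `L` with eigenvector `w = a + i b`,
self-adjointness makes `w` orthogonal to its conjugate; if `w` is moreover isotropic, then `a`, `b`
span a totally isotropic real subspace, so `w` is a complex multiple of a real vector, which cannot
be an eigenvector for `μ`. So there are no isotropic eigenvectors for `μ`. A Jordan chain
`(L - μ)² v = 0` would produce one, namely `(L - μ) v`; and algebraic multiplicity `≥ 2` would then
give a two-dimensional eigenspace, which over `ℂ` always contains an isotropic vector.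
-/

open Matrix Polynomial

namespace Matrix

variable {R n : Type*} [CommRing R] [Fintype n]

theorem IsSymm.dotProduct_mulVec_comm {J : Matrix n n R} (hJ : J.IsSymm) (x y : n → R) :
    x ⬝ᵥ (J *ᵥ y) = y ⬝ᵥ (J *ᵥ x) := by
  rw [dotProduct_mulVec, ← mulVec_transpose, hJ.eq, dotProduct_comm]

theorem IsSelfAdjoint.mulVec_dotProduct {J A : Matrix n n R} (hA : J.IsSelfAdjoint A)
    (x y : n → R) : (A *ᵥ x) ⬝ᵥ (J *ᵥ y) = x ⬝ᵥ (J *ᵥ (A *ᵥ y)) := by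
  rw [mulVec_mulVec, ← show Aᵀ * J = J * A from hA, ← mulVec_mulVec, dotProduct_mulVec x Aᵀ,
    vecMul_transpose]

theorem IsSelfAdjoint.sub_smul_one [DecidableEq n] {J A : Matrix n n R} (hA : J.IsSelfAdjoint A)
    (c : R) : J.IsSelfAdjoint (A - c • 1) := by
  change (A - c • 1)ᵀ * J = J * (A - c • 1)
  rw [transpose_sub, transpose_smul, transpose_one, sub_mul, mul_sub,
    show Aᵀ * J = J * A from hA, smul_mul_assoc, mul_smul_comm, one_mul, mul_one]

theorem IsSelfAdjoint.map {S : Type*} [CommRing S] {J A : Matrix n n R}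
    (hA : J.IsSelfAdjoint A) (f : R →+* S) : (J.map f).IsSelfAdjoint (A.map f) := by
  change (A.map f)ᵀ * J.map f = J.map f * A.map f
  rw [← transpose_map, ← Matrix.map_mul, ← Matrix.map_mul]
  exact congrArg (·.map f) hA

end Matrix

theorem Module.End.maxGenEigenspace_eq_eigenspace {R M : Type*} [CommRing R] [AddCommGroup M]
    [Module R M] {f : End R M} {μ : R} (h : f.genEigenspace μ 2 ≤ f.eigenspace μ) :
    f.maxGenEigenspace μ = f.eigenspace μ := by
  have hker : ∀ x, ((f - μ • 1 : End R M) ^ 2) x = 0 → (f - μ • 1) x = 0 := fun x hx => by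
    simpa [eigenspace_def] using h (mem_genEigenspace_nat.mpr hx)
  refine le_antisymm (fun x hx => ?_) eigenspace_le_maxGenEigenspace
  obtain ⟨k, hk⟩ := (mem_maxGenEigenspace f μ x).mp hx
  rw [eigenspace_def, LinearMap.mem_ker]
  clear hx
  induction k generalizing x with
  | zero => simp_all
  | succ k ih =>
    exact hker x (by rw [pow_two, mul_apply, ih _ (by rwa [← mul_apply, ← pow_succ])])

theorem LinearMap.BilinForm.exists_ne_zero_apply_self_eq_zero {K V : Type*} [Field K]
    [IsAlgClosed K] [AddCommGroup V] [Module K V] (B : LinearMap.BilinForm K V)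
    (hV : 1 < Module.finrank K V) : ∃ v : V, v ≠ 0 ∧ B v v = 0 := by
  have : Module.Finite K V := Module.finite_of_finrank_pos (zero_lt_one.trans hV)
  obtain ⟨x, hx⟩ := Module.finrank_pos_iff_exists_ne_zero.mp (zero_lt_one.trans hV)
  obtain ⟨y, hxy⟩ := exists_linearIndependent_pair_of_one_lt_finrank hV hx
  by_cases hy : B y y = 0
  · exact ⟨y, hxy.ne_zero 1, hy⟩
  obtain ⟨z, hz⟩ := IsAlgClosed.exists_root
    (C (B y y) * X ^ 2 + C (B x y + B y x) * X + C (B x x)) (by rw [degree_quadratic hy]; norm_num)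
  have hxzy : x + z • y ≠ 0 := fun h =>
    one_ne_zero (LinearIndependent.pair_iff.mp hxy 1 z (by simpa using h)).1
  refine ⟨x + z • y, hxzy, ?_⟩
  simp only [IsRoot, eval_add, eval_mul, eval_C, eval_pow, eval_X] at hz
  simp only [map_add, map_smul, LinearMap.add_apply, LinearMap.smul_apply, smul_eq_mul]
  linear_combination hz

section WittIndex

variable {n : Type*} [Fintype n]

def HasWittIndexLeOne (g : Matrix n n ℝ) : Prop :=
  ∀ a b : n → ℝ, a ⬝ᵥ (g *ᵥ a) = 0 → a ⬝ᵥ (g *ᵥ b) = 0 → b ⬝ᵥ (g *ᵥ b) = 0 →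
    ¬ LinearIndependent ℝ ![a, b]

theorem HasWittIndexLeOne.of_congr [DecidableEq n] {g P : Matrix n n ℝ} (hP : IsUnit P)
    (h : HasWittIndexLeOne (Pᵀ * g * P)) : HasWittIndexLeOne g := by
  have hform : ∀ x y, (P *ᵥ x) ⬝ᵥ (g *ᵥ (P *ᵥ y)) = x ⬝ᵥ ((Pᵀ * g * P) *ᵥ y) := by
    intro x y
    rw [← vecMul_transpose, ← dotProduct_mulVec, mulVec_mulVec, mulVec_mulVec, Matrix.mul_assoc]
  intro a b haa hab hbb hli
  obtain ⟨x, rfl⟩ := mulVec_surjective_iff_isUnit.mpr hP a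
  obtain ⟨y, rfl⟩ := mulVec_surjective_iff_isUnit.mpr hP b
  rw [hform] at haa hab hbb
  refine h x y haa hab hbb (LinearIndependent.of_comp P.mulVecLin ?_)
  convert hli using 1
  ext i : 1
  fin_cases i <;> rfl

def minkowskiMatrix (n : ℕ) : Matrix (Fin (n + 1)) (Fin (n + 1)) ℝ :=
  diagonal (Fin.cons (-1) 1)

theorem dotProduct_minkowskiMatrix_mulVec {n : ℕ} (x y : Fin (n + 1) → ℝ) :
    x ⬝ᵥ (minkowskiMatrix n *ᵥ y) = -(x 0 * y 0) + ∑ i : Fin n, x i.succ * y i.succ := by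
  simp [minkowskiMatrix, dotProduct, mulVec_diagonal, Fin.sum_univ_succ]

theorem eq_zero_of_minkowski_isotropic_of_head_eq_zero {n : ℕ} {z : Fin (n + 1) → ℝ}
    (h0 : z 0 = 0) (hz : z ⬝ᵥ (minkowskiMatrix n *ᵥ z) = 0) : z = 0 := by
  rw [dotProduct_minkowskiMatrix_mulVec, h0, mul_zero, neg_zero, zero_add,
    Finset.sum_eq_zero_iff_of_nonneg (fun i _ => mul_self_nonneg _)] at hz
  ext i
  refine Fin.cases h0 (fun i => ?_) i
  simpa using hz i

theorem hasWittIndexLeOne_minkowskiMatrix (n : ℕ) : HasWittIndexLeOne (minkowskiMatrix n) := by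
  intro x y hxx hxy hyy hli
  have hsymm : (minkowskiMatrix n).IsSymm := isSymm_diagonal _
  -- `x 0 • y - y 0 • x` is isotropic with vanishing time component
  have hz : x 0 • y - y 0 • x = 0 := by
    refine eq_zero_of_minkowski_isotropic_of_head_eq_zero (by simp [mul_comm]) ?_
    simp only [mulVec_sub, mulVec_smul, dotProduct_sub, sub_dotProduct, dotProduct_smul,
      smul_dotProduct, hsymm.dotProduct_mulVec_comm y x, hxx, hxy, hyy, smul_zero, sub_zero]
  have hx0 : x 0 = 0 :=
    (LinearIndependent.pair_iff.mp hli (-(y 0)) (x 0) (by rw [← hz]; module)).2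
  exact hli.ne_zero 0 (eq_zero_of_minkowski_isotropic_of_head_eq_zero hx0 hxx)

end WittIndex

section Complexification

variable {n : Type*} [Fintype n]

theorem re_map_ofReal_mulVec (L : Matrix n n ℝ) (w : n → ℂ) :
    Complex.re ∘ (L.map (algebraMap ℝ ℂ) *ᵥ w) = L *ᵥ (Complex.re ∘ w) := by
  ext i
  simp [mulVec, dotProduct, Complex.re_sum]

theorem re_dotProduct_map_ofReal_mulVec (g : Matrix n n ℝ) (w w' : n → ℂ) :
    (w ⬝ᵥ (g.map (algebraMap ℝ ℂ) *ᵥ w')).re =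
      (Complex.re ∘ w) ⬝ᵥ (g *ᵥ (Complex.re ∘ w')) -
        (Complex.im ∘ w) ⬝ᵥ (g *ᵥ (Complex.im ∘ w')) := by
  simp [mulVec, dotProduct, Complex.re_sum, Finset.mul_sum, ← Finset.sum_sub_distrib]

theorem im_dotProduct_map_ofReal_mulVec (g : Matrix n n ℝ) (w w' : n → ℂ) :
    (w ⬝ᵥ (g.map (algebraMap ℝ ℂ) *ᵥ w')).im =
      (Complex.re ∘ w) ⬝ᵥ (g *ᵥ (Complex.im ∘ w')) +
        (Complex.im ∘ w) ⬝ᵥ (g *ᵥ (Complex.re ∘ w')) := by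
  simp [mulVec, dotProduct, Complex.im_sum, Finset.mul_sum, ← Finset.sum_add_distrib]

variable {g L : Matrix n n ℝ} {μ : ℂ}

theorem eq_zero_of_map_ofReal_mulVec_eq_smul_of_re_eq_zero (hμ : μ.im ≠ 0) {u : n → ℂ}
    (hu : L.map (algebraMap ℝ ℂ) *ᵥ u = μ • u) (hre : Complex.re ∘ u = 0) : u = 0 := by
  have him : Complex.re ∘ (μ • u) = 0 := by
    rw [← hu, re_map_ofReal_mulVec, hre, mulVec_zero]
  ext i
  have hre_i : (u i).re = 0 := congrFun hre i
  have him_i : μ.im * (u i).im = 0 := by simpa [Complex.mul_re, hre_i] using congrFun him i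
  exact Complex.ext hre_i ((mul_eq_zero.mp him_i).resolve_left hμ)

theorem eq_zero_of_isotropic_eigenvector (hg : HasWittIndexLeOne g) (hgsym : g.IsSymm)
    (hL : g.IsSelfAdjoint L) (hμ : μ.im ≠ 0) {w : n → ℂ}
    (hw : L.map (algebraMap ℝ ℂ) *ᵥ w = μ • w)
    (hiso : w ⬝ᵥ (g.map (algebraMap ℝ ℂ) *ᵥ w) = 0) : w = 0 := by
  set A := L.map (algebraMap ℝ ℂ)
  set G := g.map (algebraMap ℝ ℂ)
  have hw_conj : A *ᵥ star w = star μ • star w := by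
    ext i
    simpa [A, mulVec, dotProduct] using congrArg star (congrFun hw i)
  have hperp : w ⬝ᵥ (G *ᵥ star w) = 0 := by
    have h := (hL.map (algebraMap ℝ ℂ)).mulVec_dotProduct w (star w)
    rw [hw, hw_conj, smul_dotProduct, mulVec_smul, dotProduct_smul, smul_eq_mul, smul_eq_mul] at h
    have hne : μ - star μ ≠ 0 := by
      rw [sub_ne_zero]; exact fun h => hμ (Complex.conj_eq_iff_im.mp h.symm)
    exact (mul_eq_zero.mp (by linear_combination h)).resolve_left hne
  have h1 := congrArg Complex.re hiso
  have h2 := congrArg Complex.im hiso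
  have h3 := congrArg Complex.re hperp
  have hre_conj : Complex.re ∘ star w = Complex.re ∘ w := by ext i; simp
  have him_conj : Complex.im ∘ star w = -(Complex.im ∘ w) := by ext i; simp
  rw [re_dotProduct_map_ofReal_mulVec] at h1 h3
  rw [im_dotProduct_map_ofReal_mulVec] at h2
  rw [hre_conj, him_conj, mulVec_neg, dotProduct_neg] at h3
  simp only [Complex.zero_re, Complex.zero_im] at h1 h2 h3
  set a := Complex.re ∘ w
  set b := Complex.im ∘ w
  have hsym : b ⬝ᵥ (g *ᵥ a) = a ⬝ᵥ (g *ᵥ b) := hgsym.dotProduct_mulVec_comm b a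
  obtain ⟨s, t, hst, hst0⟩ : ∃ s t : ℝ, s • a + t • b = 0 ∧ ¬(s = 0 ∧ t = 0) := by
    have := hg a b (by linarith) (by linarith) (by linarith)
    simpa [LinearIndependent.pair_iff] using this
  -- `(s - t i) • w` is an eigenvector with real part `s • a + t • b = 0`
  set c : ℂ := ⟨s, -t⟩
  have hc : c ≠ 0 := fun h => hst0 ⟨congrArg Complex.re h, neg_eq_zero.mp (congrArg Complex.im h)⟩
  have hcw : c • w = 0 := by
    refine eq_zero_of_map_ofReal_mulVec_eq_smul_of_re_eq_zero (L := L) hμ ?_ ?_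
    · rw [mulVec_smul, hw, smul_comm]
    · rw [← hst]; ext i; simp [c, a, b, Complex.mul_re]
  exact (smul_eq_zero.mp hcw).resolve_left hc

end Complexification



section LorentzianSelfAdjoint

variable {n : Type*} [Fintype n] [DecidableEq n] {g L : Matrix n n ℝ}

theorem pow_three_mulVec_eq_zero_of_pow_four_mulVec_eq_zero {N : Matrix n n ℝ}
    (hg : HasWittIndexLeOne g) (hN : g.IsSelfAdjoint N) {v : n → ℝ} (h4 : (N ^ 4) *ᵥ v = 0) :
    (N ^ 3) *ᵥ v = 0 := by
  simp only [pow_succ, pow_zero, one_mul, ← mulVec_mulVec] at h4 ⊢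
  set v2 := N *ᵥ (N *ᵥ v)
  set v3 := N *ᵥ v2
  by_contra hv3
  have hiso : ∀ x, (N *ᵥ x) ⬝ᵥ (g *ᵥ v3) = 0 := fun x => by
    rw [hN.mulVec_dotProduct, h4, mulVec_zero, dotProduct_zero]
  refine hg v2 v3 ?_ (hiso _) (hiso _) (LinearIndependent.pair_iff.mpr fun s t hst => ?_)
  · rw [hN.mulVec_dotProduct]; exact hiso v
  · have hs : s • v3 = 0 := by simpa [mulVec_add, mulVec_smul, h4] using congrArg (N *ᵥ ·) hst
    have hs0 : s = 0 := (smul_eq_zero.mp hs).resolve_right hv3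
    refine ⟨hs0, (smul_eq_zero.mp ?_).resolve_right hv3⟩
    simpa [hs0] using hst

theorem sub_smul_one_mulVec_eq_zero_of_sq_mulVec_eq_zero (hg : HasWittIndexLeOne g)
    (hgsym : g.IsSymm) (hL : g.IsSelfAdjoint L) {μ : ℂ} (hμ : μ.im ≠ 0) {v : n → ℂ}
    (hv : ((L.map (algebraMap ℝ ℂ) - μ • 1) ^ 2) *ᵥ v = 0) :
    (L.map (algebraMap ℝ ℂ) - μ • 1) *ᵥ v = 0 := by
  have hM : (g.map (algebraMap ℝ ℂ)).IsSelfAdjoint (L.map (algebraMap ℝ ℂ) - μ • 1) :=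
    (hL.map _).sub_smul_one μ
  rw [sq, ← mulVec_mulVec] at hv
  refine eq_zero_of_isotropic_eigenvector hg hgsym hL hμ ?_ ?_
  · rwa [sub_mulVec, smul_mulVec, one_mulVec, sub_eq_zero] at hv
  · rw [hM.mulVec_dotProduct, hv, mulVec_zero, dotProduct_zero]

theorem rootMultiplicity_charpoly_map_ofReal_le_one (hg : HasWittIndexLeOne g)
    (hgsym : g.IsSymm) (hL : g.IsSelfAdjoint L) {μ : ℂ} (hμ : μ.im ≠ 0) :
    (L.map (algebraMap ℝ ℂ)).charpoly.rootMultiplicity μ ≤ 1 := by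
  set A := L.map (algebraMap ℝ ℂ)
  have hφ : ∀ k x, ((toLin' A - μ • 1) ^ k) x = ((A - μ • 1) ^ k) *ᵥ x := fun k x => by
    have : toLin' A - μ • 1 = toLinAlgEquiv' (A - μ • 1) := by
      rw [map_sub, map_smul, map_one]; rfl
    rw [this, ← map_pow]; rfl
  have hgen : Module.End.maxGenEigenspace (toLin' A) μ = Module.End.eigenspace (toLin' A) μ := by
    refine Module.End.maxGenEigenspace_eq_eigenspace fun x hx => ?_
    replace hx : ((toLin' A - μ • 1 : Module.End ℂ (n → ℂ)) ^ 2) x = 0 :=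
      Module.End.mem_genEigenspace_nat.mp hx
    rw [hφ] at hx
    rw [Module.End.eigenspace_def, LinearMap.mem_ker, ← pow_one (toLin' A - μ • 1), hφ, pow_one]
    exact sub_smul_one_mulVec_eq_zero_of_sq_mulVec_eq_zero hg hgsym hL hμ hx
  rw [← charpoly_toLin', ← LinearMap.finrank_maxGenEigenspace_eq, hgen]
  by_contra! h
  set E := Module.End.eigenspace (toLin' A) μ
  obtain ⟨w, hw, hiso⟩ := LinearMap.BilinForm.exists_ne_zero_apply_self_eq_zero
    ((toLinearMap₂' ℂ (g.map (algebraMap ℝ ℂ))).compl₁₂ E.subtype E.subtype) h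
  refine hw (Subtype.ext (eq_zero_of_isotropic_eigenvector hg hgsym hL hμ ?_ ?_))
  · simpa [A] using Module.End.mem_eigenspace_iff.mp w.2
  · simpa [toLinearMap₂'_apply'] using hiso

end LorentzianSelfAdjoint

/-- a self-adjoint endomorphism of a 4-dimensional Lorentzian inner
product space has no non-real eigenvalue of algebraic multiplicity `≥ 2`, no Jordan
block of size `≥ 2` for a non-real eigenvalue, and no Jordan block of size `≥ 4`
for a real eigenvalue. -/
theorem lorentz_selfadjoint_jordan_restrictions
    (g L : Matrix (Fin 4) (Fin 4) ℝ)
    (hgsym : g.IsSymm)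
    (hsig : ∃ P : Matrix (Fin 4) (Fin 4) ℝ, IsUnit P ∧
      P.transpose * g * P = Matrix.diagonal ![-1, 1, 1, 1])
    (hselfadj : L.transpose * g = g * L) :
    (∀ μ : ℂ, μ.im ≠ 0 →
      ((L.map (algebraMap ℝ ℂ)).charpoly).rootMultiplicity μ ≤ 1) ∧
    (∀ μ : ℂ, μ.im ≠ 0 → ∀ v : Fin 4 → ℂ,
      ((L.map (algebraMap ℝ ℂ) - μ • (1 : Matrix (Fin 4) (Fin 4) ℂ)) ^ 2).mulVec v = 0 →
      (L.map (algebraMap ℝ ℂ) - μ • (1 : Matrix (Fin 4) (Fin 4) ℂ)).mulVec v = 0) ∧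
    (∀ lam : ℝ, ∀ v : Fin 4 → ℝ,
      ((L - lam • (1 : Matrix (Fin 4) (Fin 4) ℝ)) ^ 4).mulVec v = 0 →
      ((L - lam • (1 : Matrix (Fin 4) (Fin 4) ℝ)) ^ 3).mulVec v = 0) := by
  obtain ⟨P, hP, hPg⟩ := hsig
  have hminkowski : diagonal ![-1, 1, 1, 1] = minkowskiMatrix 3 := by
    rw [minkowskiMatrix]
    congr 1
    ext i
    fin_cases i <;> rfl
  have hg : HasWittIndexLeOne g :=
    .of_congr hP (hPg ▸ hminkowski ▸ hasWittIndexLeOne_minkowskiMatrix 3)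
  have hL : g.IsSelfAdjoint L := hselfadj
  exact ⟨fun μ hμ => rootMultiplicity_charpoly_map_ofReal_le_one hg hgsym hL hμ,
    fun μ hμ v => sub_smul_one_mulVec_eq_zero_of_sq_mulVec_eq_zero hg hgsym hL hμ,
    fun lam v => pow_three_mulVec_eq_zero_of_pow_four_mulVec_eq_zero hg (hL.sub_smul_one lam)⟩
end

section
/- Let g₁, g₂ be nondegenerate symmetric bilinear forms on vector spaces V₁, V₂, and let Lᵢ be gᵢ-self-adjoint endomorphisms of Vᵢ with disjoint real spectra and all eigenvalues real. Define on V = V₁ ⊕ V₂ the bilinear form g(u,v) = g₁(χ₂(L₁)u₁, v₁) + g₂(χ₁(L₂)u₂, v₂), where χᵢ is the characteristic polynomial of Lᵢ. Then g is symmetric and nondegenerate, and the block-diagonal endomorphism L = L₁ ⊕ L₂ is g-self-adjoint. -/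
/-!
As `χ₁` splits over `ℝ` and its roots, the eigenvalues of `L₁`, are not roots of `χ₂`, the two
characteristic polynomials are coprime. A Bézout identity `a χ₁ + b χ₂ = 1` together with
Cayley–Hamilton then shows that `χ₂(L₁)` and `χ₁(L₂)` are invertible. Being polynomials in `Lᵢ`,
they are `gᵢ`-self-adjoint and commute with `Lᵢ`, so each twisted form `gᵢ(χⱼ(Lᵢ) ·, ·)` is
symmetric and nondegenerate with `Lᵢ` self-adjoint, and all three properties pass to the
orthogonal sum.
-/

open Polynomial LinearMap

theorem Polynomial.Splits.isCoprime_of_forall_isRoot {K : Type*} [Field K] {p q : K[X]}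
    (hp : p.Splits) (hp₀ : p ≠ 0) (h : ∀ a, p.IsRoot a → ¬ q.IsRoot a) : IsCoprime p q := by
  classical
  rw [← EuclideanDomain.gcd_isUnit_iff, isUnit_iff_degree_eq_zero]
  by_contra hdeg
  obtain ⟨a, ha⟩ := (hp.of_dvd hp₀ (EuclideanDomain.gcd_dvd_left p q)).exists_eval_eq_zero hdeg
  exact h a (eval_eq_zero_of_dvd_of_eval_eq_zero (EuclideanDomain.gcd_dvd_left p q) ha)
    (eval_eq_zero_of_dvd_of_eval_eq_zero (EuclideanDomain.gcd_dvd_right p q) ha)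

theorem Polynomial.commute_aeval_self {R A : Type*} [CommSemiring R] [Semiring A] [Algebra R A]
    (x : A) (p : R[X]) : Commute (aeval x p) x := by
  simpa using (commute_X p).symm.map (aeval x)

theorem Polynomial.isUnit_aeval_of_isCoprime {R A : Type*} [CommRing R] [Ring A] [Algebra R A]
    {x : A} {p q : R[X]} (hp : aeval x p = 0) (hpq : IsCoprime p q) : IsUnit (aeval x q) := by
  obtain ⟨a, b, hab⟩ := hpq
  have hb : aeval x (b * q) = 1 := by simpa [hp] using congrArg (aeval x) hab
  exact ⟨⟨_, _, by rw [← map_mul, mul_comm, hb], by rw [← map_mul, hb]⟩, rfl⟩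

theorem Module.End.isCoprime_charpoly_of_splits_of_disjoint {K V W : Type*} [Field K]
    [AddCommGroup V] [Module K V] [FiniteDimensional K V]
    [AddCommGroup W] [Module K W] [FiniteDimensional K W]
    {f : Module.End K V} {g : Module.End K W} (hf : f.charpoly.Splits)
    (hfg : Disjoint (spectrum K f) (spectrum K g)) : IsCoprime f.charpoly g.charpoly :=
  hf.isCoprime_of_forall_isRoot f.charpoly_monic.ne_zero fun a hfa hga =>
    hfg.notMem_of_mem_left ((mem_spectrum_iff_isRoot_charpoly f a).mpr hfa)
      ((mem_spectrum_iff_isRoot_charpoly g a).mpr hga)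

namespace LinearMap

section SelfAdjoint

variable {R M N : Type*} [CommRing R] [AddCommGroup M] [Module R M] [AddCommGroup N] [Module R N]
  {B : M →ₗ[R] M →ₗ[R] N} {f g : Module.End R M}

theorem IsSelfAdjoint.pow (hf : B.IsSelfAdjoint f) (n : ℕ) : B.IsSelfAdjoint ⇑(f ^ n) := by
  induction n with
  | zero => exact isAdjointPair_one
  | succ n ih =>
    have := ih.mul hf
    rwa [← pow_succ, ← pow_succ'] at this

theorem IsSelfAdjoint.aeval (hf : B.IsSelfAdjoint f) (p : R[X]) :
    B.IsSelfAdjoint ⇑(aeval f p) := by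
  rw [aeval_eq_sum_range]
  exact Submodule.sum_mem B.selfAdjointSubmodule fun i _ => Submodule.smul_mem _ _ (hf.pow i)

theorem IsSelfAdjoint.comp_of_commute (hg : B.IsSelfAdjoint g) (hfg : Commute f g) :
    (B ∘ₗ f).IsSelfAdjoint g := fun x y => by
  rw [comp_apply, comp_apply, ← Module.End.mul_apply, hfg.eq, Module.End.mul_apply, hg]

theorem SeparatingLeft.comp_of_injective (hB : B.SeparatingLeft) (hf : Function.Injective f) :
    (B ∘ₗ f).SeparatingLeft := fun x hx => hf (by rw [map_zero]; exact hB _ hx)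

end SelfAdjoint

namespace BilinForm

variable {R M M₁ M₂ : Type*} [CommRing R] [AddCommGroup M] [Module R M]
  [AddCommGroup M₁] [Module R M₁] [AddCommGroup M₂] [Module R M₂]

theorem IsSymm.comp_of_isSelfAdjoint {B : LinearMap.BilinForm R M} {f : Module.End R M}
    (hB : B.IsSymm) (hf : B.IsSelfAdjoint f) : IsSymm (B ∘ₗ f) :=
  ⟨fun x y => by rw [LinearMap.comp_apply, LinearMap.comp_apply, hf, hB.eq]⟩

variable (B₁ : LinearMap.BilinForm R M₁) (B₂ : LinearMap.BilinForm R M₂)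

def prod : LinearMap.BilinForm R (M₁ × M₂) :=
  B₁.compl₁₂ (fst R M₁ M₂) (fst R M₁ M₂) + B₂.compl₁₂ (snd R M₁ M₂) (snd R M₁ M₂)

variable {B₁ B₂}

@[simp]
theorem prod_apply (x y : M₁ × M₂) : B₁.prod B₂ x y = B₁ x.1 y.1 + B₂ x.2 y.2 := rfl

theorem IsSymm.prod (h₁ : B₁.IsSymm) (h₂ : B₂.IsSymm) : (B₁.prod B₂).IsSymm :=
  ⟨fun x y => by rw [prod_apply, prod_apply, h₁.eq, h₂.eq]⟩

theorem SeparatingLeft.prod (h₁ : B₁.SeparatingLeft) (h₂ : B₂.SeparatingLeft) :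
    (B₁.prod B₂).SeparatingLeft := fun x hx =>
  Prod.ext (h₁ _ fun y => by simpa using hx (y, 0)) (h₂ _ fun y => by simpa using hx (0, y))

theorem IsSelfAdjoint.prodMap {f₁ : M₁ → M₁} {f₂ : M₂ → M₂} (h₁ : B₁.IsSelfAdjoint f₁)
    (h₂ : B₂.IsSelfAdjoint f₂) : (B₁.prod B₂).IsSelfAdjoint (Prod.map f₁ f₂) := fun x y => by
  simp only [prod_apply, Prod.map_fst, Prod.map_snd, h₁ x.1, h₂ x.2]

end BilinForm

end LinearMap

theorem glued_form_symmetric_nondegenerate_selfadjoint_general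
    {V₁ V₂ : Type*} [AddCommGroup V₁] [Module ℝ V₁] [FiniteDimensional ℝ V₁]
    [AddCommGroup V₂] [Module ℝ V₂] [FiniteDimensional ℝ V₂]
    (g₁ : V₁ →ₗ[ℝ] V₁ →ₗ[ℝ] ℝ) (g₂ : V₂ →ₗ[ℝ] V₂ →ₗ[ℝ] ℝ)
    (hg₁sym : ∀ u v, g₁ u v = g₁ v u) (hg₂sym : ∀ u v, g₂ u v = g₂ v u)
    (hg₁nd : ∀ u, (∀ v, g₁ u v = 0) → u = 0)
    (hg₂nd : ∀ u, (∀ v, g₂ u v = 0) → u = 0)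
    (L₁ : Module.End ℝ V₁) (L₂ : Module.End ℝ V₂)
    (hL₁sa : ∀ u v, g₁ (L₁ u) v = g₁ u (L₁ v))
    (hL₂sa : ∀ u v, g₂ (L₂ u) v = g₂ u (L₂ v))
    (hsplit₁ : Polynomial.Splits ((LinearMap.charpoly L₁).map (RingHom.id ℝ)))
    (hdisj : Disjoint (spectrum ℝ L₁) (spectrum ℝ L₂))
    (G : V₁ × V₂ → V₁ × V₂ → ℝ)
    (hG : ∀ u v : V₁ × V₂, G u v =
      g₁ ((Polynomial.aeval L₁ (LinearMap.charpoly L₂)) u.1) v.1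
        + g₂ ((Polynomial.aeval L₂ (LinearMap.charpoly L₁)) u.2) v.2) :
    (∀ u v, G u v = G v u) ∧
    (∀ u, (∀ v, G u v = 0) → u = 0) ∧
    (∀ u v : V₁ × V₂, G (L₁ u.1, L₂ u.2) v = G u (L₁ v.1, L₂ v.2)) := by
  rw [Polynomial.map_id] at hsplit₁
  set A := aeval L₁ L₂.charpoly
  set B := aeval L₂ L₁.charpoly
  have hcop := Module.End.isCoprime_charpoly_of_splits_of_disjoint hsplit₁ hdisj
  have hA : Function.Injective A :=
    ((Module.End.isUnit_iff A).mp (isUnit_aeval_of_isCoprime L₁.aeval_self_charpoly hcop)).1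
  have hB : Function.Injective B :=
    ((Module.End.isUnit_iff B).mp
      (isUnit_aeval_of_isCoprime L₂.aeval_self_charpoly hcop.symm)).1
  obtain rfl : G = fun u v => BilinForm.prod (g₁ ∘ₗ A) (g₂ ∘ₗ B) u v := funext₂ hG
  refine ⟨(BilinForm.IsSymm.prod ?_ ?_).eq, BilinForm.SeparatingLeft.prod ?_ ?_,
    BilinForm.IsSelfAdjoint.prodMap ?_ ?_⟩
  · exact BilinForm.IsSymm.comp_of_isSelfAdjoint ⟨hg₁sym⟩ (IsSelfAdjoint.aeval hL₁sa _)
  · exact BilinForm.IsSymm.comp_of_isSelfAdjoint ⟨hg₂sym⟩ (IsSelfAdjoint.aeval hL₂sa _)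
  · exact SeparatingLeft.comp_of_injective hg₁nd hA
  · exact SeparatingLeft.comp_of_injective hg₂nd hB
  · exact IsSelfAdjoint.comp_of_commute hL₁sa (commute_aeval_self L₁ _)
  · exact IsSelfAdjoint.comp_of_commute hL₂sa (commute_aeval_self L₂ _)

/-- gluing of nondegenerate symmetric bilinear forms along self-adjoint
endomorphisms with disjoint real spectra yields a symmetric nondegenerate form on the
direct sum, for which `L₁ ⊕ L₂` is self-adjoint. -/
theorem glued_form_symmetric_nondegenerate_selfadjoint
    {V₁ V₂ : Type*} [AddCommGroup V₁] [Module ℝ V₁] [FiniteDimensional ℝ V₁]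
    [AddCommGroup V₂] [Module ℝ V₂] [FiniteDimensional ℝ V₂]
    (g₁ : V₁ →ₗ[ℝ] V₁ →ₗ[ℝ] ℝ) (g₂ : V₂ →ₗ[ℝ] V₂ →ₗ[ℝ] ℝ)
    (hg₁sym : ∀ u v, g₁ u v = g₁ v u) (hg₂sym : ∀ u v, g₂ u v = g₂ v u)
    (hg₁nd : ∀ u, (∀ v, g₁ u v = 0) → u = 0)
    (hg₂nd : ∀ u, (∀ v, g₂ u v = 0) → u = 0)
    (L₁ : Module.End ℝ V₁) (L₂ : Module.End ℝ V₂)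
    (hL₁sa : ∀ u v, g₁ (L₁ u) v = g₁ u (L₁ v))
    (hL₂sa : ∀ u v, g₂ (L₂ u) v = g₂ u (L₂ v))
    (hsplit₁ : Polynomial.Splits ((LinearMap.charpoly L₁).map (RingHom.id ℝ)))
    (hsplit₂ : Polynomial.Splits ((LinearMap.charpoly L₂).map (RingHom.id ℝ)))
    (hdisj : Disjoint (spectrum ℝ L₁) (spectrum ℝ L₂))
    (G : V₁ × V₂ → V₁ × V₂ → ℝ)
    (hG : ∀ u v : V₁ × V₂, G u v =
      g₁ ((Polynomial.aeval L₁ (LinearMap.charpoly L₂)) u.1) v.1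
        + g₂ ((Polynomial.aeval L₂ (LinearMap.charpoly L₁)) u.2) v.2) :
    (∀ u v, G u v = G v u) ∧
    (∀ u, (∀ v, G u v = 0) → u = 0) ∧
    (∀ u v : V₁ × V₂, G (L₁ u.1, L₂ u.2) v = G u (L₁ v.1, L₂ v.2)) :=
  glued_form_symmetric_nondegenerate_selfadjoint_general g₁ g₂ hg₁sym hg₂sym hg₁nd hg₂nd L₁ L₂ hL₁sa
    hL₂sa hsplit₁ hdisj G hG
end
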